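/- Let ρ be a density matrix on C^{d} with eigenvalues {r_i}. If d·‖ρ − I/d‖₁ ≤ 1 and d ≥ 2, then max_i |ln(r_i d)| ≤ d·‖ρ − I/d‖₁. -/

import Mathlib

/-! Put `t = d ‖ρ - I/d‖₁ = ∑ᵢ |d rᵢ - 1|`. The deviations `d rᵢ - 1` sum to zero, so each one
is at most `t / 2` in absolute value, and `d rᵢ ≥ 1 - t / 2 ≥ 1 / 2`. Then `log x ≤ x - 1` bounds
`log (d rᵢ)` by `t / 2` from above, and `-log x ≤ 1 / x - 1 ≤ (t / 2) / (1 / 2)` bounds it by `t`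
from below. -/

open Matrix MeasureTheory Filter Kronecker
open scoped ComplexOrder

noncomputable def traceNorm {n : Type*} [Fintype n] [DecidableEq n] (X : Matrix n n ℂ) : ℝ :=
  ((Matrix.posSemidef_conjTranspose_mul_self X).1.eigenvectorUnitary.1 *
    diagonal (((↑) : ℝ → ℂ) ∘ Real.sqrt ∘ (Matrix.posSemidef_conjTranspose_mul_self X).1.eigenvalues) *
    (star (Matrix.posSemidef_conjTranspose_mul_self X).1.eigenvectorUnitary : Matrix n n ℂ)).trace.re

noncomputable def frobNorm {n : Type*} [Fintype n] (X : Matrix n n ℂ) : ℝ :=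
  Real.sqrt ((Xᴴ * X)).trace.re

noncomputable def opNorm {n : Type*} [Fintype n] [DecidableEq n] (X : Matrix n n ℂ) : ℝ :=
  ‖LinearMap.toContinuousLinearMap (Matrix.toEuclideanLin X)‖

namespace Matrix.IsHermitian

variable {𝕜 n : Type*} [RCLike 𝕜] [Fintype n] [DecidableEq n] {A : Matrix n n 𝕜}

lemma trace_cfc (hA : A.IsHermitian) (f : ℝ → ℝ) :
    (cfc f A).trace = ∑ i, (f (hA.eigenvalues i) : 𝕜) := by
  rw [hA.cfc_eq, IsHermitian.cfc, Unitary.conjStarAlgAut_apply, trace_mul_cycle,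
    Unitary.coe_star_mul_self, one_mul, trace_diagonal]
  rfl

open scoped MatrixOrder in
lemma sqrt_mul_self_eq_cfc_abs (hA : A.IsHermitian) :
    CFC.sqrt (A * A) = cfc (fun x : ℝ => |x|) A := by
  refine CFC.sqrt_unique ?_ (cfc_nonneg fun x _ => abs_nonneg x)
  rw [← cfc_mul .., funext fun x : ℝ => abs_mul_abs_self x, cfc_mul (fun x : ℝ => x) _ A,
    cfc_id' ℝ A]

end Matrix.IsHermitian

open scoped MatrixOrder in
lemma traceNorm_eq_re_trace_sqrt {n : Type*} [Fintype n] [DecidableEq n] (X : Matrix n n ℂ) :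
    traceNorm X = (CFC.sqrt (Xᴴ * X)).trace.re := by
  have hX := posSemidef_conjTranspose_mul_self X
  rw [traceNorm, CFC.sqrt_eq_cfc, cfc_nnreal_eq_real _ _ hX.nonneg,
    show (fun x : ℝ => ((NNReal.sqrt x.toNNReal : NNReal) : ℝ)) = Real.sqrt from
      funext fun x => (Real.sqrt.eq_1 x).symm,
    hX.1.cfc_eq]
  rfl

lemma Matrix.IsHermitian.traceNorm_sub_smul_one {n : Type*} [Fintype n] [DecidableEq n]
    {A : Matrix n n ℂ} (hA : A.IsHermitian) (c : ℝ) :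
    traceNorm (A - (c : ℂ) • 1) = ∑ i, |hA.eigenvalues i - c| := by
  have hcfc : A - (c : ℂ) • 1 = cfc (· - c) A := by
    rw [cfc_sub .., cfc_id' .., cfc_const .., Algebra.algebraMap_eq_smul_one, Complex.coe_smul]
  have hX : (A - (c : ℂ) • 1).IsHermitian := hcfc ▸ cfc_predicate _ A
  rw [traceNorm_eq_re_trace_sqrt, hX.eq, hX.sqrt_mul_self_eq_cfc_abs, hcfc, ← cfc_comp' ..,
    hA.trace_cfc]
  simp

lemma two_mul_abs_le_sum_abs_of_sum_eq_zero {ι α : Type*} [Fintype ι] [Ring α] [LinearOrder α]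
    [IsOrderedRing α] {f : ι → α} (hf : ∑ j, f j = 0) (i : ι) :
    2 * |f i| ≤ ∑ j, |f j| := by
  classical
  have hrest : f i = -∑ j ∈ Finset.univ.erase i, f j := by
    rw [eq_neg_iff_add_eq_zero, Finset.add_sum_erase _ _ (Finset.mem_univ i), hf]
  calc 2 * |f i| = |f i| + |∑ j ∈ Finset.univ.erase i, f j| := by rw [two_mul, hrest, abs_neg]
    _ ≤ |f i| + ∑ j ∈ Finset.univ.erase i, |f j| := by grw [Finset.abs_sum_le_sum_abs]
    _ = ∑ j, |f j| := Finset.add_sum_erase _ (fun j => |f j|) (Finset.mem_univ i)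

lemma Real.abs_log_le_of_two_mul_abs_sub_one_le {x t : ℝ} (hx : 2 * |x - 1| ≤ t) (ht : t ≤ 1) :
    |Real.log x| ≤ t := by
  obtain ⟨hlo, hhi⟩ := abs_le.mp (le_div_iff₀' two_pos |>.mpr hx)
  have hx0 : 0 < x := by linarith
  rcases le_total 1 x with h1 | h1
  · rw [abs_of_nonneg (Real.log_nonneg h1)]
    linarith [Real.log_le_sub_one_of_pos hx0]
  · rw [abs_of_nonpos (Real.log_nonpos hx0.le h1), ← Real.log_inv]
    have hinv : x⁻¹ ≤ t + 1 := by
      rw [inv_le_iff_one_le_mul₀ hx0]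
      nlinarith [abs_nonneg (x - 1)]
    linarith [Real.log_le_sub_one_of_pos (inv_pos.mpr hx0)]

theorem abs_log_eigenvalue_le_trace_dist_general {d : ℕ}
    (ρ : Matrix (Fin d) (Fin d) ℂ) (hρ : ρ.PosSemidef) (htr : ρ.trace = 1)
    (hsmall : (d : ℝ) * traceNorm (ρ - ((d : ℂ))⁻¹ • 1) ≤ 1) :
    ∀ i, |Real.log (hρ.1.eigenvalues i * d)| ≤
      (d : ℝ) * traceNorm (ρ - ((d : ℂ))⁻¹ • 1) := by
  intro i
  set r := hρ.1.eigenvalues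
  have hd : (0 : ℝ) < d := Nat.cast_pos.mpr i.pos
  rw [show ((d : ℂ))⁻¹ = (((d : ℝ)⁻¹ : ℝ) : ℂ) by push_cast; rfl,
    hρ.1.traceNorm_sub_smul_one] at hsmall ⊢
  have hsum : ∑ j, (r j - (d : ℝ)⁻¹) = 0 := by
    have hr : ∑ j, r j = 1 := by
      have h := hρ.1.trace_eq_sum_eigenvalues.symm.trans htr
      rwa [← RCLike.ofReal_sum, ← RCLike.ofReal_one, RCLike.ofReal_inj] at h
    simp [Finset.sum_sub_distrib, hr, hd.ne']
  refine Real.abs_log_le_of_two_mul_abs_sub_one_le ?_ hsmall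
  calc 2 * |r i * d - 1| = d * (2 * |r i - (d : ℝ)⁻¹|) := by
        rw [show r i * d - 1 = d * (r i - (d : ℝ)⁻¹) by field_simp, abs_mul, abs_of_pos hd]
        ring
    _ ≤ d * ∑ j, |r j - (d : ℝ)⁻¹| := by
        grw [two_mul_abs_le_sum_abs_of_sum_eq_zero hsum i]

/-- If `d ‖ρ − I/d‖₁ ≤ 1` and `d ≥ 2`, then for the eigenvalues `rᵢ` of the density
matrix `ρ` one has `max_i |ln(rᵢ d)| ≤ d ‖ρ − I/d‖₁`. -/
theorem abs_log_eigenvalue_le_trace_dist {d : ℕ} (hd : 2 ≤ d)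
    (ρ : Matrix (Fin d) (Fin d) ℂ) (hρ : ρ.PosSemidef) (htr : ρ.trace = 1)
    (hsmall : (d : ℝ) * traceNorm (ρ - ((d : ℂ))⁻¹ • 1) ≤ 1) :
    ∀ i, |Real.log (hρ.1.eigenvalues i * d)| ≤
      (d : ℝ) * traceNorm (ρ - ((d : ℂ))⁻¹ • 1) :=
  abs_log_eigenvalue_le_trace_dist_general ρ hρ htr hsmall
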